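/- arXiv:2308.01099 — 3 statements merged into one kernel-verified Lean document; each statement's English description precedes it below -/
import Mathlib

section
/- Let G be an abelian group, M ⊆ G a sharp submonoid, R a commutative ring, α : M → R a multiplicative map, and ℓ₁, ℓ₂ ∈ M elements with α(ℓ₁) = 0 and α(ℓ₂) = 0. Define S to be the set of quadruples (a₁, s₁, a₂, s₂) ∈ M × ℤ × M × ℤ such that (i) a₁ + s₁·ℓ₁ = a₂ + s₂·ℓ₂ in G, (ii) s₁ + s₂ = 0, and (iii) for each k ∈ {1,2}, either s_k ≥ 0, or (a_k + s_k·ℓ_k ∈ M and α(a_k + s_k·ℓ_k) = 0). Define T = {(a₁, a₂) ∈ M × M : ∃ s ∈ ℤ, a₂ − a₁ = s·(ℓ₁ + ℓ₂) in G}. Then the image of S under the projection (a₁, s₁, a₂, s₂) ↦ (a₁, a₂) is exactly T. -/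
/-! Condition (ii) forces `s₂ = -s₁`, and then (i) is a rearrangement of
`a₂ - a₁ = s₁ • (ℓ₁ + ℓ₂)`. Condition (iii) is automatic: if `s₁ < 0`, then by (i)
`a₁ + s₁ • ℓ₁ = a₂ + (-s₁) • ℓ₂` is a positive multiple of `ℓ₂` added to an element of `M`,
so it lies in `M` and `α` kills it since `α ℓ₂ = 0`; symmetrically for `s₂ < 0`. -/

lemma map_add_nsmul_of_map_add {M R : Type*} [AddMonoid M] [Monoid R] (α : M → R)
    (hαadd : ∀ a b : M, α (a + b) = α a * α b) (a ℓ : M) (n : ℕ) :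
    α (a + n • ℓ) = α a * α ℓ ^ n := by
  induction n with
  | zero => simp
  | succ n ih => rw [succ_nsmul, ← add_assoc, hαadd, ih, pow_succ, mul_assoc]

lemma add_zsmul_eq_add_neg_zsmul_iff {G : Type*} [AddCommGroup G] (x y u v : G) (s : ℤ) :
    x + s • u = y + (-s) • v ↔ y - x = s • (u + v) := by
  constructor <;> intro h <;> linear_combination (norm := module) -h

lemma exists_mem_map_eq_zero_of_eq_add_zsmul {G R : Type*} [AddCommGroup G] [MonoidWithZero R]
    {M : AddSubmonoid G} (α : M → R) (hαadd : ∀ a b : M, α (a + b) = α a * α b)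
    {b ℓ : M} (hℓ : α ℓ = 0) {x : G} {n : ℤ} (hx : x = b + n • (ℓ : G)) (hn : 0 < n) :
    ∃ h : x ∈ M, α ⟨x, h⟩ = 0 := by
  obtain ⟨k, rfl⟩ := Int.eq_ofNat_of_zero_le hn.le
  have hxk : x = ((b + k • ℓ : M) : G) := by simp [hx]
  subst hxk
  refine ⟨(b + k • ℓ).2, ?_⟩
  rw [map_add_nsmul_of_map_add α hαadd, hℓ, zero_pow (by omega), mul_zero]

theorem image_of_gluing_monoid_eq_divisibility_monoid_general
    {G R : Type*} [AddCommGroup G] [CommRing R]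
    (M : AddSubmonoid G)
    (α : M → R)
    (hαadd : ∀ a b : M, α (a + b) = α a * α b)
    (ℓ₁ ℓ₂ : M) (hℓ₁ : α ℓ₁ = 0) (hℓ₂ : α ℓ₂ = 0) :
    (fun q : M × ℤ × M × ℤ => (q.1, q.2.2.1)) ''
      {q : M × ℤ × M × ℤ |
        (q.1 : G) + q.2.1 • (ℓ₁ : G) = (q.2.2.1 : G) + q.2.2.2 • (ℓ₂ : G) ∧
        q.2.1 + q.2.2.2 = 0 ∧
        (0 ≤ q.2.1 ∨
          ∃ h : (q.1 : G) + q.2.1 • (ℓ₁ : G) ∈ M,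
            α ⟨(q.1 : G) + q.2.1 • (ℓ₁ : G), h⟩ = 0) ∧
        (0 ≤ q.2.2.2 ∨
          ∃ h : (q.2.2.1 : G) + q.2.2.2 • (ℓ₂ : G) ∈ M,
            α ⟨(q.2.2.1 : G) + q.2.2.2 • (ℓ₂ : G), h⟩ = 0)} =
    {p : M × M | ∃ s : ℤ, (p.2 : G) - (p.1 : G) = s • ((ℓ₁ : G) + (ℓ₂ : G))} := by
  ext ⟨a₁, a₂⟩
  simp only [Set.mem_image, Set.mem_ofPred_eq, Prod.mk.injEq]
  constructor
  · rintro ⟨⟨b₁, s, b₂, t⟩, ⟨hglue, hst, -, -⟩, rfl, rfl⟩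
    obtain rfl : t = -s := eq_neg_of_add_eq_zero_right hst
    exact ⟨s, (add_zsmul_eq_add_neg_zsmul_iff _ _ _ _ s).1 hglue⟩
  · rintro ⟨s, hs⟩
    have hglue := (add_zsmul_eq_add_neg_zsmul_iff _ _ _ _ s).2 hs
    refine ⟨(a₁, s, a₂, -s), ⟨hglue, add_neg_cancel s, ?_, ?_⟩, rfl, rfl⟩
    · rcases le_or_gt 0 s with hs₀ | hs₀
      · exact .inl hs₀
      · exact .inr (exists_mem_map_eq_zero_of_eq_add_zsmul α hαadd hℓ₂ hglue (by omega))
    · rcases le_or_gt 0 (-s) with hs₀ | hs₀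
      · exact .inl hs₀
      · exact .inr (exists_mem_map_eq_zero_of_eq_add_zsmul α hαadd hℓ₁ hglue.symm (by omega))

/-- Let `G` be an abelian group, `M ⊆ G` a sharp submonoid, `R` a commutative ring,
`α : M → R` a multiplicative map (`α 0 = 1`, `α (a+b) = α a * α b`), and
`ℓ₁, ℓ₂ ∈ M` with `α ℓ₁ = 0` and `α ℓ₂ = 0`.  Let `S` be the set of quadruples
`(a₁, s₁, a₂, s₂) ∈ M × ℤ × M × ℤ` with
(i) `a₁ + s₁ • ℓ₁ = a₂ + s₂ • ℓ₂` in `G`, (ii) `s₁ + s₂ = 0`, and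
(iii) for each `k ∈ {1,2}`, either `s_k ≥ 0` or
(`a_k + s_k • ℓ_k ∈ M` and `α (a_k + s_k • ℓ_k) = 0`).
Let `T = {(a₁, a₂) ∈ M × M : ∃ s : ℤ, a₂ - a₁ = s • (ℓ₁ + ℓ₂)}`.
Then the image of `S` under `(a₁, s₁, a₂, s₂) ↦ (a₁, a₂)` is exactly `T`. -/
theorem image_of_gluing_monoid_eq_divisibility_monoid
    {G R : Type*} [AddCommGroup G] [CommRing R]
    (M : AddSubmonoid G)
    (hsharp : ∀ a ∈ M, -a ∈ M → a = 0)
    (α : M → R) (hα0 : α 0 = 1)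
    (hαadd : ∀ a b : M, α (a + b) = α a * α b)
    (ℓ₁ ℓ₂ : M) (hℓ₁ : α ℓ₁ = 0) (hℓ₂ : α ℓ₂ = 0) :
    (fun q : M × ℤ × M × ℤ => (q.1, q.2.2.1)) ''
      {q : M × ℤ × M × ℤ |
        (q.1 : G) + q.2.1 • (ℓ₁ : G) = (q.2.2.1 : G) + q.2.2.2 • (ℓ₂ : G) ∧
        q.2.1 + q.2.2.2 = 0 ∧
        (0 ≤ q.2.1 ∨
          ∃ h : (q.1 : G) + q.2.1 • (ℓ₁ : G) ∈ M,
            α ⟨(q.1 : G) + q.2.1 • (ℓ₁ : G), h⟩ = 0) ∧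
        (0 ≤ q.2.2.2 ∨
          ∃ h : (q.2.2.1 : G) + q.2.2.2 • (ℓ₂ : G) ∈ M,
            α ⟨(q.2.2.1 : G) + q.2.2.2 • (ℓ₂ : G), h⟩ = 0)} =
    {p : M × M | ∃ s : ℤ, (p.2 : G) - (p.1 : G) = s • ((ℓ₁ : G) + (ℓ₂ : G))} :=
  image_of_gluing_monoid_eq_divisibility_monoid_general M α hαadd ℓ₁ ℓ₂ hℓ₁ hℓ₂
end

section
/- Let P = {(0,0)} ∪ {(x,y) ∈ ℤ × ℤ : x ≥ 0 and x + y > 0}, a subset of ℤ × ℤ. Then: (1) P is an (additive) submonoid of ℤ × ℤ; (2) P is saturated in ℤ × ℤ, i.e. for every v ∈ ℤ × ℤ and integer n ≥ 1 with n·v ∈ P one has v ∈ P; and (3) P is not finitely generated as a monoid. -/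
/-!
Grade `ℤ × ℤ` by `(x, y) ↦ x + y`. Every nonzero element of `P` has positive degree, so `P` has
no nontrivial units and each element of degree one is irreducible. A generating set of `P` must
contain every irreducible element, but the elements `(k, 1 - k)`, `k ∈ ℕ`, are infinitely many
elements of degree one.
-/

/-- The characteristic monoid at the marking of the pierced standard local model:
`P = {(0,0)} ∪ {(x,y) ∈ ℤ × ℤ : x ≥ 0 ∧ x + y > 0}`. -/
def piercedMonoidSet : Set (ℤ × ℤ) :=
  {((0 : ℤ), (0 : ℤ))} ∪ {p : ℤ × ℤ | 0 ≤ p.1 ∧ 0 < p.1 + p.2}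

namespace AddSubmonoid

variable {G : Type*} [AddCommMonoid G] {M : AddSubmonoid G} {f : G →+ ℤ}

lemma apply_nonneg_of_pos (hf : ∀ x ∈ M, x ≠ 0 → 0 < f x) {x : G} (hx : x ∈ M) : 0 ≤ f x := by
  obtain rfl | hx0 := eq_or_ne x 0
  · simp
  · exact (hf x hx hx0).le

lemma eq_zero_of_apply_nonpos (hf : ∀ x ∈ M, x ≠ 0 → 0 < f x) {x : G} (hx : x ∈ M)
    (h : f x ≤ 0) : x = 0 := by
  by_contra hx0
  exact (hf x hx hx0).not_ge h

lemma subsingleton_addUnits_of_pos (hf : ∀ x ∈ M, x ≠ 0 → 0 < f x) :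
    Subsingleton (AddUnits M) := by
  have eq_zero (u : AddUnits M) : u = 0 := by
    have hsum : f (u : M) + f ((-u : AddUnits M) : M) = 0 := by
      rw [← map_add, ← AddSubmonoid.coe_add, AddUnits.add_neg, ZeroMemClass.coe_zero, map_zero]
    have hneg := apply_nonneg_of_pos hf ((-u : AddUnits M) : M).2
    ext
    exact eq_zero_of_apply_nonpos hf (u : M).2 (by omega)
  exact ⟨fun u v => by rw [eq_zero u, eq_zero v]⟩

lemma addIrreducible_of_apply_eq_one (hf : ∀ x ∈ M, x ≠ 0 → 0 < f x) {x : M}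
    (hx : f x = 1) : AddIrreducible x := by
  have := subsingleton_addUnits_of_pos hf
  constructor
  · rw [isAddUnit_iff_eq_zero]
    rintro rfl
    simp at hx
  · intro a b hab
    simp only [isAddUnit_iff_eq_zero, ← ZeroMemClass.coe_eq_zero]
    have hsum : f a + f b = 1 := by rw [← map_add, ← AddSubmonoid.coe_add, ← hab, hx]
    rcases le_or_gt (f a) 0 with ha0 | ha0
    · exact .inl (eq_zero_of_apply_nonpos hf a.2 ha0)
    · exact .inr (eq_zero_of_apply_nonpos hf b.2 (by omega))

lemma not_fg_of_infinite_apply_eq_one (hf : ∀ x ∈ M, x ≠ 0 → 0 < f x)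
    (hinf : {x ∈ M | f x = 1}.Infinite) : ¬M.FG := by
  intro hM
  rw [← AddMonoid.fg_iff_addSubmonoid_fg] at hM
  have := subsingleton_addUnits_of_pos hf
  refine hinf (((finite_addIrreducible (M := M)).image Subtype.val).subset ?_)
  rintro x ⟨hxM, hx⟩
  exact ⟨⟨x, hxM⟩, addIrreducible_of_apply_eq_one hf hx, rfl⟩

end AddSubmonoid

lemma mem_piercedMonoidSet_iff {p : ℤ × ℤ} :
    p ∈ piercedMonoidSet ↔ (p.1 = 0 ∧ p.2 = 0) ∨ (0 ≤ p.1 ∧ 0 < p.1 + p.2) := by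
  simp [piercedMonoidSet, Prod.ext_iff]

def piercedSubmonoid : AddSubmonoid (ℤ × ℤ) where
  carrier := piercedMonoidSet
  zero_mem' := by simp [mem_piercedMonoidSet_iff]
  add_mem' {a b} ha hb := by
    rw [mem_piercedMonoidSet_iff] at *
    simp only [Prod.fst_add, Prod.snd_add]
    omega

lemma smul_mem_piercedMonoidSet_iff {n : ℤ} (hn : 0 < n) {v : ℤ × ℤ} :
    n • v ∈ piercedMonoidSet ↔ v ∈ piercedMonoidSet := by
  simp only [mem_piercedMonoidSet_iff, Prod.smul_fst, Prod.smul_snd, smul_eq_mul, ← mul_add,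
    mul_eq_zero, hn.ne', false_or, mul_nonneg_iff_of_pos_left hn, mul_pos_iff_of_pos_left hn]

lemma piercedSubmonoid_not_fg : ¬piercedSubmonoid.FG := by
  let degree : ℤ × ℤ →+ ℤ := AddMonoidHom.fst ℤ ℤ + AddMonoidHom.snd ℤ ℤ
  refine AddSubmonoid.not_fg_of_infinite_apply_eq_one (f := degree) ?_ ?_
  · intro p hp hp0
    have hp' := mem_piercedMonoidSet_iff.1 hp
    have : ¬(p.1 = 0 ∧ p.2 = 0) := fun h => hp0 (Prod.ext h.1 h.2)
    simp only [degree, AddMonoidHom.add_apply, AddMonoidHom.coe_fst, AddMonoidHom.coe_snd]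
    omega
  · refine Set.infinite_of_injective_forall_mem (f := fun k : ℕ => ((k : ℤ), 1 - (k : ℤ)))
      (fun k l h => by simpa using congrArg Prod.fst h) fun k => ⟨?_, ?_⟩
    · show _ ∈ piercedMonoidSet
      rw [mem_piercedMonoidSet_iff]
      omega
    · simp [degree]

/-- Let `P = {(0,0)} ∪ {(x,y) ∈ ℤ × ℤ : x ≥ 0 ∧ x + y > 0}`.  Then:
(1) `P` is an additive submonoid of `ℤ × ℤ`;
(2) `P` is saturated in `ℤ × ℤ`: for every `v ∈ ℤ × ℤ` and integer `n ≥ 1`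
with `n • v ∈ P` one has `v ∈ P`; and
(3) `P` is not finitely generated as a monoid: no finite subset of `P`
generates `P` as a submonoid. -/
theorem piercedMonoid_submonoid_saturated_not_fg :
    (∃ N : AddSubmonoid (ℤ × ℤ), (N : Set (ℤ × ℤ)) = piercedMonoidSet) ∧
    (∀ v : ℤ × ℤ, ∀ n : ℤ, 1 ≤ n → n • v ∈ piercedMonoidSet →
      v ∈ piercedMonoidSet) ∧
    (∀ s : Finset (ℤ × ℤ), (s : Set (ℤ × ℤ)) ⊆ piercedMonoidSet →
      (AddSubmonoid.closure (s : Set (ℤ × ℤ)) : Set (ℤ × ℤ)) ≠ piercedMonoidSet) := by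
  refine ⟨⟨piercedSubmonoid, rfl⟩, fun v n hn => (smul_mem_piercedMonoidSet_iff hn).1,
    fun s _ hs => piercedSubmonoid_not_fg ⟨s, SetLike.coe_injective hs⟩⟩
end

section
/- Let G be an abelian group, M ⊆ G a sharp submonoid, R a commutative ring, α : M → R a multiplicative map, and ℓ ∈ M. Define M̊ = {(m, s) ∈ M × ℤ : s ≥ 0, or (m + s·ℓ ∈ M and α(m + s·ℓ) = 0)}. Then: (1) M̊ is an (additive) submonoid of M × ℤ; (2) for every (m, s) ∈ M̊ the element m + s·ℓ of G lies in M; and (3) the resulting map M̊ → M, (m, s) ↦ m + s·ℓ, is a monoid homomorphism. -/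
/-!
Write `σ(m, s) = m + s • ℓ`. Elements with `s ≥ 0` have `σ ∈ M` because `M` is a monoid containing
`ℓ`, and the others have `σ ∈ M` by definition; since `σ` is additive on `M × ℤ`, it remains to see
that `M̊` is closed under addition. If `s + t < 0` then one summand, say `(m, s)`, has `s < 0`, so
`α (σ(m, s)) = 0`, and multiplicativity gives `α (σ(m + n, s + t)) = α (σ(m, s)) * α (σ(n, t)) = 0`.
-/

namespace AddSubmonoid

variable {G R : Type*} [AddCommGroup G] {M : AddSubmonoid G} {ℓ : M}

theorem coe_fst_add_snd_zsmul_add (p q : M × ℤ) :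
    ((p + q).1 : G) + (p + q).2 • (ℓ : G) =
      ((p.1 : G) + p.2 • (ℓ : G)) + ((q.1 : G) + q.2 • (ℓ : G)) := by
  simp only [Prod.fst_add, Prod.snd_add, coe_add, add_zsmul]
  abel

theorem add_zsmul_mem_of_nonneg (m : M) {s : ℤ} (hs : 0 ≤ s) : (m : G) + s • (ℓ : G) ∈ M := by
  lift s to ℕ using hs
  rw [natCast_zsmul]
  exact M.add_mem m.2 (M.nsmul_mem ℓ.2 s)

variable [MulZeroClass R] {α : M → R}

variable (M ℓ α) in
/-- The underlying set of the pierced monoid `M̊`. -/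
def piercingSet : Set (M × ℤ) :=
  {p | 0 ≤ p.2 ∨ ∃ h : (p.1 : G) + p.2 • (ℓ : G) ∈ M, α ⟨(p.1 : G) + p.2 • (ℓ : G), h⟩ = 0}

theorem add_zsmul_mem_of_mem_piercingSet {p : M × ℤ} (hp : p ∈ M.piercingSet ℓ α) :
    (p.1 : G) + p.2 • (ℓ : G) ∈ M := by
  rcases hp with hs | ⟨h, -⟩
  · exact add_zsmul_mem_of_nonneg p.1 hs
  · exact h

theorem add_mem_piercingSet (hα : ∀ a b : M, α (a + b) = α a * α b) {p q : M × ℤ}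
    (hp : p ∈ M.piercingSet ℓ α) (hq : q ∈ M.piercingSet ℓ α) :
    p + q ∈ M.piercingSet ℓ α := by
  rcases le_or_gt 0 (p.2 + q.2) with hpq | hpq
  · exact Or.inl hpq
  have hp' := add_zsmul_mem_of_mem_piercingSet hp
  have hq' := add_zsmul_mem_of_mem_piercingSet hq
  have hpq' : ((p + q).1 : G) + (p + q).2 • (ℓ : G) ∈ M := by
    rw [coe_fst_add_snd_zsmul_add]
    exact M.add_mem hp' hq'
  have hsum : (⟨((p + q).1 : G) + (p + q).2 • (ℓ : G), hpq'⟩ : M) =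
      ⟨(p.1 : G) + p.2 • (ℓ : G), hp'⟩ + ⟨(q.1 : G) + q.2 • (ℓ : G), hq'⟩ :=
    Subtype.ext (coe_fst_add_snd_zsmul_add p q)
  refine Or.inr ⟨hpq', ?_⟩
  rw [hsum, hα]
  rcases hp with hp | ⟨_, hp⟩
  · rcases hq with hq | ⟨_, hq⟩
    · exact absurd (add_nonneg hp hq) hpq.not_ge
    · rw [hq, mul_zero]
  · rw [hp, zero_mul]

variable (M ℓ α)

def piercing (hα : ∀ a b : M, α (a + b) = α a * α b) : AddSubmonoid (M × ℤ) where
  carrier := M.piercingSet ℓ α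
  add_mem' := add_mem_piercingSet hα
  zero_mem' := Or.inl le_rfl

/-- The pullback along the lifted section, `(m, s) ↦ m + s • ℓ`. -/
def piercingSection (hα : ∀ a b : M, α (a + b) = α a * α b) : M.piercing ℓ α hα →+ M where
  toFun p := ⟨((p : M × ℤ).1 : G) + (p : M × ℤ).2 • (ℓ : G), add_zsmul_mem_of_mem_piercingSet p.2⟩
  map_zero' := by ext; simp
  map_add' p q := Subtype.ext (coe_fst_add_snd_zsmul_add p.1 q.1)

end AddSubmonoid

theorem pierced_monoid_and_section_hom_general
    {G R : Type*} [AddCommGroup G] [CommRing R]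
    (M : AddSubmonoid G)
    (α : M → R)
    (hαadd : ∀ a b : M, α (a + b) = α a * α b)
    (ℓ : M) :
    -- (2): every element of M̊ has its associated element `m + s • ℓ` in M
    (∀ p : M × ℤ,
        (0 ≤ p.2 ∨ ∃ h : ((p.1 : G) + p.2 • (ℓ : G)) ∈ M,
            α ⟨(p.1 : G) + p.2 • (ℓ : G), h⟩ = 0) →
        ((p.1 : G) + p.2 • (ℓ : G)) ∈ M) ∧
    -- (1) and (3): M̊ is a submonoid of M × ℤ, and `(m, s) ↦ m + s • ℓ` is a
    -- monoid homomorphism M̊ → M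
    (∃ N : AddSubmonoid (M × ℤ),
      (N : Set (M × ℤ)) =
        {p : M × ℤ |
          0 ≤ p.2 ∨ ∃ h : ((p.1 : G) + p.2 • (ℓ : G)) ∈ M,
            α ⟨(p.1 : G) + p.2 • (ℓ : G), h⟩ = 0} ∧
      ∃ f : N →+ M, ∀ p : N,
        ((f p : G)) = ((p : M × ℤ).1 : G) + (p : M × ℤ).2 • (ℓ : G)) :=
  ⟨fun _ => AddSubmonoid.add_zsmul_mem_of_mem_piercingSet,
    M.piercing ℓ α hαadd, rfl, M.piercingSection ℓ α hαadd, fun _ => rfl⟩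

/-- Let `G` be an abelian group, `M ⊆ G` a sharp submonoid, `R` a commutative
ring, `α : M → R` a multiplicative map, and `ℓ ∈ M`.  Define
`M̊ = {(m, s) ∈ M × ℤ : s ≥ 0, or (m + s • ℓ ∈ M and α (m + s • ℓ) = 0)}`.
Then: (1) `M̊` is an additive submonoid of `M × ℤ`;
(2) for every `(m, s) ∈ M̊` the element `m + s • ℓ` of `G` lies in `M`; and
(3) the resulting map `M̊ → M, (m, s) ↦ m + s • ℓ`, is a monoid homomorphism. -/
theorem pierced_monoid_and_section_hom
    {G R : Type*} [AddCommGroup G] [CommRing R]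
    (M : AddSubmonoid G)
    (hsharp : ∀ a ∈ M, -a ∈ M → a = 0)
    (α : M → R) (hα0 : α 0 = 1)
    (hαadd : ∀ a b : M, α (a + b) = α a * α b)
    (ℓ : M) :
    -- (2): every element of M̊ has its associated element `m + s • ℓ` in M
    (∀ p : M × ℤ,
        (0 ≤ p.2 ∨ ∃ h : ((p.1 : G) + p.2 • (ℓ : G)) ∈ M,
            α ⟨(p.1 : G) + p.2 • (ℓ : G), h⟩ = 0) →
        ((p.1 : G) + p.2 • (ℓ : G)) ∈ M) ∧
    -- (1) and (3): M̊ is a submonoid of M × ℤ, and `(m, s) ↦ m + s • ℓ` is a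
    -- monoid homomorphism M̊ → M
    (∃ N : AddSubmonoid (M × ℤ),
      (N : Set (M × ℤ)) =
        {p : M × ℤ |
          0 ≤ p.2 ∨ ∃ h : ((p.1 : G) + p.2 • (ℓ : G)) ∈ M,
            α ⟨(p.1 : G) + p.2 • (ℓ : G), h⟩ = 0} ∧
      ∃ f : N →+ M, ∀ p : N,
        ((f p : G)) = ((p : M × ℤ).1 : G) + (p : M × ℤ).2 • (ℓ : G)) :=
  pierced_monoid_and_section_hom_general M α hαadd ℓ
end
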